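/- Let α > 0 and let φ : ℝ → ℂ be bounded, continuous and almost automorphic. Then the functions L₁φ(t) = ∫_{−∞}^t e^{−α(t−s)} φ(s) ds and L₂φ(t) = ∫_t^{∞} e^{α(t−s)} φ(s) ds are well defined, bounded, continuous and almost automorphic, and sup_{t∈ℝ} |Lᵢφ(t)| ≤ (sup_{t∈ℝ} |φ(t)|)/α for i = 1, 2. -/

import Mathlib

open MeasureTheory Filter Topology

/-- A continuous function `ψ : ℝ → V` into a Banach space is almost automorphic if for every
sequence of reals there is a subsequence `(τₙ)` and a function `ψ̃` with
`ψ(t+τₙ) → ψ̃(t)` and `ψ̃(t−τₙ) → ψ(t)` pointwise on `ℝ`. -/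
def AlmostAutomorphic {V : Type*} [NormedAddCommGroup V] (ψ : ℝ → V) : Prop :=
  Continuous ψ ∧ ∀ σ : ℕ → ℝ, ∃ k : ℕ → ℕ, StrictMono k ∧ ∃ ψt : ℝ → V,
    (∀ t : ℝ, Tendsto (fun n => ψ (t + σ (k n))) atTop (𝓝 (ψt t))) ∧
    (∀ t : ℝ, Tendsto (fun n => ψt (t - σ (k n))) atTop (𝓝 (ψ t)))

/-!
Substituting `s = t - u` writes both operators as averages `∫ u, k u • φ (t - u) ∂μ` of
translates of `φ` against an integrable kernel: `e^{-αu}` on `[0, ∞)` and `e^{αu}` on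
`(-∞, 0]`, each of total mass `1/α`. For such averages, continuity in `t` and the two pointwise
limits in the definition of almost automorphy pass under the integral by dominated convergence,
with dominating function `|k| * sup ‖φ‖`; the limit function `φ̃` is bounded by the same
constant and measurable as a pointwise limit of translates of `φ`.
-/

open Set Real

section TranslateAverage

variable {V : Type*} [NormedAddCommGroup V] [NormedSpace ℝ V]
  {μ : Measure ℝ} {k : ℝ → ℝ} {f : ℝ → V} {C : ℝ}

lemma norm_smul_comp_sub_le (hfC : ∀ t, ‖f t‖ ≤ C) (t u : ℝ) :
    ‖k u • f (t - u)‖ ≤ |k u| * C := by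
  rw [norm_smul, Real.norm_eq_abs]
  exact mul_le_mul_of_nonneg_left (hfC _) (abs_nonneg _)

lemma integrable_smul_comp_sub (hk : Integrable k μ) (hf : StronglyMeasurable f)
    (hfC : ∀ t, ‖f t‖ ≤ C) (t : ℝ) : Integrable (fun u => k u • f (t - u)) μ :=
  hk.smul_of_top_left <| memLp_top_of_bound
    (hf.comp_measurable (measurable_const.sub measurable_id)).aestronglyMeasurable C
    (ae_of_all _ fun _ => hfC _)

lemma norm_integral_smul_comp_sub_le (hk : Integrable k μ) (hfC : ∀ t, ‖f t‖ ≤ C) (t : ℝ) :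
    ‖∫ u, k u • f (t - u) ∂μ‖ ≤ (∫ u, |k u| ∂μ) * C := by
  rw [← integral_mul_const]
  exact norm_integral_le_of_norm_le (hk.abs.mul_const C)
    (ae_of_all _ fun u => norm_smul_comp_sub_le hfC t u)

lemma continuous_integral_smul_comp_sub (hk : Integrable k μ) (hf : Continuous f)
    (hfC : ∀ t, ‖f t‖ ≤ C) : Continuous fun t => ∫ u, k u • f (t - u) ∂μ :=
  continuous_of_dominated
    (fun t => (integrable_smul_comp_sub hk hf.stronglyMeasurable hfC t).aestronglyMeasurable)
    (fun t => ae_of_all _ fun u => norm_smul_comp_sub_le hfC t u) (hk.abs.mul_const C)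
    (ae_of_all _ fun _ => continuous_const.smul (hf.comp (continuous_id.sub continuous_const)))

lemma tendsto_integral_smul_comp_sub (hk : Integrable k μ) {F : ℕ → ℝ → V}
    (hF : ∀ n, StronglyMeasurable (F n)) (hFC : ∀ n t, ‖F n t‖ ≤ C)
    (hFf : ∀ t, Tendsto (fun n => F n t) atTop (𝓝 (f t))) (t : ℝ) :
    Tendsto (fun n => ∫ u, k u • F n (t - u) ∂μ) atTop (𝓝 (∫ u, k u • f (t - u) ∂μ)) :=
  tendsto_integral_of_dominated_convergence (fun u => |k u| * C)
    (fun n => (integrable_smul_comp_sub hk (hF n) (hFC n) t).aestronglyMeasurable)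
    (hk.abs.mul_const C) (fun n => ae_of_all _ fun u => norm_smul_comp_sub_le (hFC n) t u)
    (ae_of_all _ fun u => (hFf (t - u)).const_smul (k u))

theorem AlmostAutomorphic.integral_smul_comp_sub (hf : AlmostAutomorphic f)
    (hfC : ∀ t, ‖f t‖ ≤ C) (hk : Integrable k μ) :
    AlmostAutomorphic fun t => ∫ u, k u • f (t - u) ∂μ := by
  obtain ⟨hf_cont, hf_aa⟩ := hf
  refine ⟨continuous_integral_smul_comp_sub hk hf_cont hfC, fun σ => ?_⟩
  obtain ⟨m, hm, g, hfg, hgf⟩ := hf_aa σ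
  have hf_shift : ∀ n, StronglyMeasurable fun x => f (x + σ (m n)) := fun n =>
    (hf_cont.comp (continuous_add_const (σ (m n)))).stronglyMeasurable
  have hg : StronglyMeasurable g := stronglyMeasurable_of_tendsto atTop hf_shift
    (tendsto_pi_nhds.2 hfg)
  have hgC : ∀ t, ‖g t‖ ≤ C := fun t => le_of_tendsto' (hfg t).norm fun _ => hfC _
  refine ⟨m, hm, fun t => ∫ u, k u • g (t - u) ∂μ, fun t => ?_, fun t => ?_⟩
  · simp only [add_sub_right_comm]
    exact tendsto_integral_smul_comp_sub hk hf_shift (fun _ _ => hfC _) hfg t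
  · simp only [sub_right_comm _ (σ _)]
    exact tendsto_integral_smul_comp_sub hk
      (fun n => hg.comp_measurable (measurable_sub_const (σ (m n)))) (fun _ _ => hgC _) hgf t

end TranslateAverage

section ConstSub

variable {E : Type*} [NormedAddCommGroup E] (g : ℝ → E) (t : ℝ)

lemma integrableOn_Iic_iff_integrableOn_Ici_comp_sub :
    IntegrableOn g (Iic t) ↔ IntegrableOn (fun u => g (t - u)) (Ici 0) := by
  simpa [Function.comp_def] using
    ((Measure.measurePreserving_sub_left volume t).integrableOn_comp_preimage
      (measurableEmbedding_subLeft t) (f := g) (s := Iic t)).symm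

lemma integrableOn_Ici_iff_integrableOn_Iic_comp_sub :
    IntegrableOn g (Ici t) ↔ IntegrableOn (fun u => g (t - u)) (Iic 0) := by
  simpa [Function.comp_def] using
    ((Measure.measurePreserving_sub_left volume t).integrableOn_comp_preimage
      (measurableEmbedding_subLeft t) (f := g) (s := Ici t)).symm

variable [NormedSpace ℝ E]

lemma integral_Iic_eq_integral_Ici_comp_sub :
    ∫ s in Iic t, g s = ∫ u in Ici 0, g (t - u) := by
  simpa using ((Measure.measurePreserving_sub_left volume t).setIntegral_preimage_emb
    (measurableEmbedding_subLeft t) g (Iic t)).symm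

lemma integral_Ici_eq_integral_Iic_comp_sub :
    ∫ s in Ici t, g s = ∫ u in Iic 0, g (t - u) := by
  simpa using ((Measure.measurePreserving_sub_left volume t).setIntegral_preimage_emb
    (measurableEmbedding_subLeft t) g (Ici t)).symm

end ConstSub

lemma integrableOn_exp_neg_mul_Ici {α : ℝ} (hα : 0 < α) :
    IntegrableOn (fun u => exp (-α * u)) (Ici 0) := by
  rw [integrableOn_Ici_iff_integrableOn_Ioi]
  exact integrableOn_exp_mul_Ioi (neg_neg_of_pos hα) 0

lemma integral_exp_neg_mul_Ici {α : ℝ} (hα : 0 < α) :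
    ∫ u in Ici 0, exp (-α * u) = 1 / α := by
  rw [integral_Ici_eq_integral_Ioi, integral_exp_mul_Ioi (neg_neg_of_pos hα)]
  simp

theorem exponential_convolutions_preserve_almost_automorphic
    (α : ℝ) (hα : 0 < α)
    (φ : ℝ → ℂ) (hφb : ∃ C, ∀ t, ‖φ t‖ ≤ C)
    (hφaa : AlmostAutomorphic φ) :
    (∀ t : ℝ, IntegrableOn (fun s => (Real.exp (-α * (t - s)) : ℂ) * φ s) (Set.Iic t)) ∧
    (∀ t : ℝ, IntegrableOn (fun s => (Real.exp (α * (t - s)) : ℂ) * φ s) (Set.Ici t)) ∧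
    Continuous (fun t => ∫ s in Set.Iic t, (Real.exp (-α * (t - s)) : ℂ) * φ s) ∧
    Continuous (fun t => ∫ s in Set.Ici t, (Real.exp (α * (t - s)) : ℂ) * φ s) ∧
    (∀ t : ℝ, ‖∫ s in Set.Iic t, (Real.exp (-α * (t - s)) : ℂ) * φ s‖ ≤ (⨆ t : ℝ, ‖φ t‖) / α) ∧
    (∀ t : ℝ, ‖∫ s in Set.Ici t, (Real.exp (α * (t - s)) : ℂ) * φ s‖ ≤ (⨆ t : ℝ, ‖φ t‖) / α) ∧
    AlmostAutomorphic (fun t => ∫ s in Set.Iic t, (Real.exp (-α * (t - s)) : ℂ) * φ s) ∧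
    AlmostAutomorphic (fun t => ∫ s in Set.Ici t, (Real.exp (α * (t - s)) : ℂ) * φ s) := by
  obtain ⟨C₀, hC₀⟩ := hφb
  have hφC : ∀ t, ‖φ t‖ ≤ ⨆ t, ‖φ t‖ := le_ciSup ⟨C₀, by rintro _ ⟨t, rfl⟩; exact hC₀ t⟩
  have hk₁ := integrableOn_exp_neg_mul_Ici hα
  have hk₂ := integrableOn_exp_mul_Iic hα 0
  have hφm := hφaa.1.stronglyMeasurable
  have hL₁ : (fun t => ∫ s in Iic t, (exp (-α * (t - s)) : ℂ) * φ s)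
      = fun t => ∫ u in Ici 0, exp (-α * u) • φ (t - u) := by
    simp only [integral_Iic_eq_integral_Ici_comp_sub, sub_sub_cancel, Complex.real_smul]
  have hL₂ : (fun t => ∫ s in Ici t, (exp (α * (t - s)) : ℂ) * φ s)
      = fun t => ∫ u in Iic 0, exp (α * u) • φ (t - u) := by
    simp only [integral_Ici_eq_integral_Iic_comp_sub, sub_sub_cancel, Complex.real_smul]
  refine ⟨fun t => ?_, fun t => ?_, ?_, ?_, fun t => ?_, fun t => ?_, ?_, ?_⟩
  · rw [integrableOn_Iic_iff_integrableOn_Ici_comp_sub]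
    simpa only [IntegrableOn, sub_sub_cancel, ← Complex.real_smul]
      using integrable_smul_comp_sub hk₁ hφm hφC t
  · rw [integrableOn_Ici_iff_integrableOn_Iic_comp_sub]
    simpa only [IntegrableOn, sub_sub_cancel, ← Complex.real_smul]
      using integrable_smul_comp_sub hk₂ hφm hφC t
  · rw [hL₁]; exact continuous_integral_smul_comp_sub hk₁ hφaa.1 hφC
  · rw [hL₂]; exact continuous_integral_smul_comp_sub hk₂ hφaa.1 hφC
  · calc _ ≤ (∫ u in Ici 0, |exp (-α * u)|) * ⨆ t, ‖φ t‖ := by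
          rw [congrFun hL₁ t]; exact norm_integral_smul_comp_sub_le hk₁ hφC t
      _ = _ := by simp only [abs_exp, integral_exp_neg_mul_Ici hα]; ring
  · calc _ ≤ (∫ u in Iic 0, |exp (α * u)|) * ⨆ t, ‖φ t‖ := by
          rw [congrFun hL₂ t]; exact norm_integral_smul_comp_sub_le hk₂ hφC t
      _ = _ := by simp only [abs_exp, integral_exp_mul_Iic hα, mul_zero, exp_zero]; ring
  · rw [hL₁]; exact hφaa.integral_smul_comp_sub hφC hk₁
  · rw [hL₂]; exact hφaa.integral_smul_comp_sub hφC hk₂
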